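/- Let $S = (S^\alpha_i)$ be an $n \times m$ real matrix ($n \ge 2$) with singular values $s_1 \ge \cdots \ge s_n \ge 0$. If $s_1 \ge \sqrt{n-1}$ and $s_i s_j \le 1$ for all $i \ne j$, then $\det\left(\delta_{ij} + \sum_{\alpha=1}^m S^\alpha_i S^\alpha_j\right) \le 1 + \left(\sum_{\alpha=1}^m \left(\sum_{i=1}^n (S^\alpha_i)^2\right)^{1/2}\right)^2$, where the determinant is of the $n \times n$ matrix $I_n + S S^T$ (viewing $S^\alpha$ as the $\alpha$-th column of an $n\times m$ matrix). Equivalently, $\prod_{i=1}^n(1+s_i^2) \le 1 + (\sum_\alpha |S^\alpha|)^2$ where $|S^\alpha|$ denotes the Euclidean norm of the $\alpha$-th column. -/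

import Mathlib

/-!
Diagonalising `S Sᵀ` gives `det (1 + S Sᵀ) = ∏ (1 + sᵢ²)`. For orthonormal eigenvectors `vᵢ` of
`S Sᵀ` the vectors `Sᵀ vᵢ` are pairwise orthogonal of norm `sᵢ`; pairing each of them with its
normalisation, expanding in the standard basis and using Cauchy–Schwarz together with Bessel's
inequality (once for the `vᵢ`, once for the normalised `Sᵀ vᵢ`) yields `∑ sᵢ ≤ ∑_α ‖S^α‖`.

It remains to show `∏ (1 + sᵢ²) ≤ 1 + (∑ sᵢ)²`. Adding the factors `1 + a²` for the other singular
values one at a time to `1 + s₀²`, the bound `1 + y²` with `y` the partial sum survives as long as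
`a y ≤ 2`, and this holds because `s₀ a ≤ 1` and `s₀² ≥ n - 1`.
-/

open Finset
open scoped RealInnerProductSpace Matrix

theorem one_add_sq_mul_prod_one_add_sq_le {ι : Type*} (F : Finset ι) {t : ℝ} {a : ι → ℝ}
    (ht : 0 ≤ t) (ha : ∀ i ∈ F, 0 ≤ a i) (hta : ∀ i ∈ F, t * a i ≤ 1) (hF : (#F : ℝ) ≤ t ^ 2) :
    (1 + t ^ 2) * ∏ i ∈ F, (1 + a i ^ 2) ≤ 1 + (t + ∑ i ∈ F, a i) ^ 2 := by
  induction F using Finset.cons_induction with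
  | empty => simp
  | cons x F hx ih =>
    simp only [mem_cons, forall_eq_or_imp] at ha hta
    rw [card_cons, Nat.cast_succ] at hF
    rw [prod_cons, sum_cons]
    set u := ∑ i ∈ F, a i
    have hu : 0 ≤ u := sum_nonneg ha.2
    have hua : t ^ 2 * (u * a x) ≤ #F := calc
      t ^ 2 * (u * a x) = ∑ i ∈ F, (t * a i) * (t * a x) := by
        rw [sum_mul, mul_sum]; exact sum_congr rfl fun i _ => by ring
      _ ≤ ∑ _i ∈ F, 1 := sum_le_sum fun i hi =>
        mul_le_one₀ (hta.2 i hi) (mul_nonneg ht ha.1) hta.1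
      _ = #F := by simp
    have hua_le_one : u * a x ≤ 1 := by nlinarith
    have hy : 0 ≤ (t + u) * a x := mul_nonneg (add_nonneg ht hu) ha.1
    calc (1 + t ^ 2) * ((1 + a x ^ 2) * ∏ i ∈ F, (1 + a i ^ 2))
        = (1 + a x ^ 2) * ((1 + t ^ 2) * ∏ i ∈ F, (1 + a i ^ 2)) := by ring
      _ ≤ (1 + a x ^ 2) * (1 + (t + u) ^ 2) := by gcongr; exact ih ha.2 hta.2 (by linarith)
      _ ≤ 1 + (t + (a x + u)) ^ 2 := by
        nlinarith [mul_nonneg hy (show 0 ≤ 2 - (t + u) * a x by nlinarith)]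

theorem prod_one_add_sq_le_one_add_sq_sum {ι : Type*} [Fintype ι] [DecidableEq ι] {a : ι → ℝ}
    (i₀ : ι) (ha : ∀ i, 0 ≤ a i) (hpair : ∀ i, i ≠ i₀ → a i * a i₀ ≤ 1)
    (hcard : (Fintype.card ι : ℝ) - 1 ≤ a i₀ ^ 2) :
    ∏ i, (1 + a i ^ 2) ≤ 1 + (∑ i, a i) ^ 2 := by
  rw [← mul_prod_erase _ _ (mem_univ i₀), ← add_sum_erase _ _ (mem_univ i₀)]
  refine one_add_sq_mul_prod_one_add_sq_le _ (ha i₀) (fun i _ => ha i) (fun i hi => ?_) ?_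
  · rw [mul_comm]; exact hpair i (ne_of_mem_erase hi)
  · rw [card_erase_of_mem (mem_univ i₀), card_univ, Nat.cast_pred (Fintype.card_pos_iff.2 ⟨i₀⟩)]
    exact hcard

section InnerProductSpace

variable {ι κ E F : Type*}
  [NormedAddCommGroup E] [InnerProductSpace ℝ E] [NormedAddCommGroup F] [InnerProductSpace ℝ F]

theorem orthonormal_normalize_of_pairwise_inner_eq_zero {w : ι → F}
    (hw : Pairwise fun i j => ⟪w i, w j⟫ = 0) :
    Orthonormal ℝ fun i : {i // w i ≠ 0} => ‖w i‖⁻¹ • w i := by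
  refine ⟨fun i => norm_smul_inv_norm i.2, fun i j hij => ?_⟩
  simp only [real_inner_smul_left, real_inner_smul_right, hw (Subtype.coe_ne_coe.2 hij), mul_zero]

variable [Fintype ι] [Fintype κ]

theorem sum_inner_normalize_sq_le {w : ι → F} (hw : Pairwise fun i j => ⟪w i, w j⟫ = 0) (x : F) :
    ∑ i, ⟪‖w i‖⁻¹ • w i, x⟫ ^ 2 ≤ ‖x‖ ^ 2 := by
  classical
  rw [← sum_filter_of_ne (p := fun i => w i ≠ 0) fun i _ h hi => by simp [hi] at h,
    sum_subtype (p := fun i => w i ≠ 0) _ (fun i => by simp)]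
  simpa only [Real.norm_eq_abs, sq_abs] using
    (orthonormal_normalize_of_pairwise_inner_eq_zero hw).sum_inner_products_le x (s := univ)

theorem sum_norm_apply_le_sum_norm_adjoint_apply [FiniteDimensional ℝ E] [FiniteDimensional ℝ F]
    (T : E →ₗ[ℝ] F) {v : ι → E} (hv : Orthonormal ℝ v)
    (hTv : Pairwise fun i j => ⟪T (v i), T (v j)⟫ = 0) (b : OrthonormalBasis κ ℝ F) :
    ∑ i, ‖T (v i)‖ ≤ ∑ k, ‖T.adjoint (b k)‖ := by
  set u := fun i => ‖T (v i)‖⁻¹ • T (v i)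
  -- `‖T (v i)‖ = ⟪u i, T (v i)⟫`, also when `T (v i) = 0` since then `u i = 0`
  have hnorm : ∀ i, ‖T (v i)‖ = ∑ k, ⟪u i, b k⟫ * ⟪T.adjoint (b k), v i⟫ := by
    intro i
    simp_rw [LinearMap.adjoint_inner_left]
    rw [b.sum_inner_mul_inner, real_inner_smul_left, real_inner_self_eq_norm_sq]
    rcases eq_or_ne ‖T (v i)‖ 0 with h | h
    · simp [h]
    · field_simp
  have hbessel_v : ∀ y, ∑ i, ⟪y, v i⟫ ^ 2 ≤ ‖y‖ ^ 2 := fun y => by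
    simpa only [real_inner_comm, Real.norm_eq_abs, sq_abs] using
      hv.sum_inner_products_le y (s := univ)
  calc ∑ i, ‖T (v i)‖ = ∑ k, ∑ i, ⟪u i, b k⟫ * ⟪T.adjoint (b k), v i⟫ := by
        simp_rw [hnorm]; exact sum_comm
    _ ≤ ∑ k, ‖b k‖ * ‖T.adjoint (b k)‖ := by
        refine sum_le_sum fun k _ => (Real.sum_mul_le_sqrt_mul_sqrt _ _ _).trans ?_
        gcongr
        · exact Real.sqrt_le_left (norm_nonneg _) |>.2 (sum_inner_normalize_sq_le hTv _)
        · exact Real.sqrt_le_left (norm_nonneg _) |>.2 (hbessel_v _)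
    _ = ∑ k, ‖T.adjoint (b k)‖ := by simp [b.orthonormal.1]

theorem inner_apply_apply_eq_of_adjoint_comp_self [FiniteDimensional ℝ E] [FiniteDimensional ℝ F]
    (T : E →ₗ[ℝ] F) (x : E) {y : E} {μ : ℝ} (hy : (T.adjoint ∘ₗ T) y = μ • y) :
    ⟪T x, T y⟫ = μ * ⟪x, y⟫ := by
  rw [← LinearMap.adjoint_inner_right, ← LinearMap.comp_apply, hy, real_inner_smul_right]

end InnerProductSpace

theorem Matrix.IsHermitian.det_one_add {𝕜 n : Type*} [RCLike 𝕜] [Fintype n] [DecidableEq n]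
    {A : Matrix n n 𝕜} (hA : A.IsHermitian) :
    (1 + A).det = ∏ i, (1 + (hA.eigenvalues i : 𝕜)) := by
  conv_lhs => rw [hA.spectral_theorem, Unitary.conjStarAlgAut_apply, Matrix.mul_assoc,
    Matrix.det_one_add_mul_comm, Matrix.mul_assoc, Unitary.coe_star_mul_self, Matrix.mul_one,
    ← Matrix.diagonal_one, Matrix.diagonal_add, Matrix.det_diagonal]
  rfl

theorem Matrix.IsHermitian.sum_sqrt_eigenvalues_le {m n : Type*} [Fintype m] [Fintype n]
    [DecidableEq m] [DecidableEq n] {S : Matrix n m ℝ} (hA : (S * Sᵀ).IsHermitian) :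
    ∑ j, √(hA.eigenvalues j) ≤ ∑ α, √(∑ i, S i α ^ 2) := by
  set T := Matrix.toEuclideanLin Sᵀ
  set v := hA.eigenvectorBasis
  have hadj : T.adjoint = Matrix.toEuclideanLin S := by
    rw [← Matrix.toEuclideanLin_conjTranspose_eq_adjoint,
      Matrix.conjTranspose_eq_transpose_of_trivial, Matrix.transpose_transpose]
  have heig : ∀ j, (T.adjoint ∘ₗ T) (v j) = hA.eigenvalues j • v j := fun j => by
    ext i
    simpa [hadj, T, Matrix.mulVec_mulVec] using congrFun (hA.mulVec_eigenvectorBasis j) i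
  have hTv : ∀ i j, ⟪T (v i), T (v j)⟫ = hA.eigenvalues j * ⟪v i, v j⟫ := fun i j =>
    inner_apply_apply_eq_of_adjoint_comp_self T _ (heig j)
  have hnorm : ∀ j, ‖T (v j)‖ = √(hA.eigenvalues j) := fun j => by
    rw [← Real.sqrt_sq (norm_nonneg _), ← real_inner_self_eq_norm_sq, hTv,
      real_inner_self_eq_norm_sq, v.orthonormal.1, one_pow, mul_one]
  have hcol : ∀ α, ‖T.adjoint (EuclideanSpace.basisFun m ℝ α)‖ = √(∑ i, S i α ^ 2) := fun α => by
    simp [hadj, EuclideanSpace.norm_eq]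
  simpa only [hnorm, hcol] using sum_norm_apply_le_sum_norm_adjoint_apply T v.orthonormal
    (fun i j hij => (hTv i j).trans (by rw [v.orthonormal.2 hij, mul_zero]))
    (EuclideanSpace.basisFun m ℝ)

/-- Lemma 3.4: for an `n × m` matrix `S` (`n ≥ 2`) whose singular values
`s 0 ≥ ⋯ ≥ s (n-1) ≥ 0` (square roots of the eigenvalues of `S * Sᵀ`) satisfy
`s 0 ≥ √(n-1)` and `s i * s j ≤ 1` for `i ≠ j`, one has
`det (I + S Sᵀ) ≤ 1 + (∑_α ‖S^α‖)²` where `S^α` is the `α`-th column. -/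
theorem stmt_1 (n m : ℕ) (hn : 2 ≤ n) (S : Matrix (Fin n) (Fin m) ℝ)
    (hA : (S * S.transpose).IsHermitian)
    (s : Fin n → ℝ) (hnonneg : ∀ i, 0 ≤ s i)
    (heig : ∃ σ : Equiv.Perm (Fin n), ∀ i, hA.eigenvalues (σ i) = s i ^ 2)
    (h1 : Real.sqrt ((n : ℝ) - 1) ≤ s ⟨0, by omega⟩)
    (hpair : ∀ i j : Fin n, i ≠ j → s i * s j ≤ 1) :
    (1 + S * S.transpose).det ≤
      1 + (∑ α : Fin m, Real.sqrt (∑ i : Fin n, S i α ^ 2)) ^ 2 := by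
  obtain ⟨σ, hσ⟩ := heig
  have hdet : (1 + S * S.transpose).det = ∏ i, (1 + s i ^ 2) := by
    rw [hA.det_one_add, ← Equiv.prod_comp σ]
    simp only [RCLike.ofReal_real_eq_id, id, hσ]
  have hsum : ∑ i, s i ≤ ∑ α, √(∑ i, S i α ^ 2) := by
    have h := hA.sum_sqrt_eigenvalues_le
    rw [← Equiv.sum_comp σ (fun j => √(hA.eigenvalues j))] at h
    simpa only [hσ, Real.sqrt_sq (hnonneg _)] using h
  calc (1 + S * S.transpose).det = ∏ i, (1 + s i ^ 2) := hdet
    _ ≤ 1 + (∑ i, s i) ^ 2 :=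
      prod_one_add_sq_le_one_add_sq_sum _ hnonneg (fun i hi => hpair i _ hi)
        (by simpa using (Real.sqrt_le_left (hnonneg _)).1 h1)
    _ ≤ 1 + (∑ α, √(∑ i, S i α ^ 2)) ^ 2 := by
      gcongr
      exact sum_nonneg fun i _ => hnonneg i
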